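/- Let (N, D, θ) be a sandpile model in dimension d with complete neighborhood N, set r = max{|v|_∞ : v ∈ N}, and let c be a configuration lying within the elementary hypercube of side n with c(x) < 2θ for every cell x. Then the set of cells that topple at some time during the parallel evolution, i.e. {x ∈ ℤ^d : ∃ s ≥ 0, F^s(c)(x) ≥ θ}, has cardinality at most (8·d·θ·r·n^d)^d. -/

import Mathlib

/-- A sandpile model in dimension `d`: a finite nonempty neighborhood
`N ⊆ ℤ^d \ {0}` and a distribution `D` with `D v ≥ 1` for `v ∈ N`. -/
structure Sandpile (d : ℕ) where
  N : Finset (Fin d → ℤ)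
  D : (Fin d → ℤ) → ℕ
  N_nonempty : N.Nonempty
  zero_not_mem : (0 : Fin d → ℤ) ∉ N
  D_pos : ∀ v ∈ N, 1 ≤ D v

/-- The stability threshold `θ = Σ_{v ∈ N} D(v)`. -/
def Sandpile.θ {d : ℕ} (M : Sandpile d) : ℕ := ∑ v ∈ M.N, M.D v

/-- The Heaviside function: `H n = 1` if `n ≥ 0`, else `0`. -/
def Heaviside (n : ℤ) : ℕ := if 0 ≤ n then 1 else 0

/-- The parallel global rule `F`. -/
def Sandpile.F {d : ℕ} (M : Sandpile d) (c : (Fin d → ℤ) → ℕ) : (Fin d → ℤ) → ℕ :=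
  fun x => c x - M.θ * Heaviside ((c x : ℤ) - (M.θ : ℤ))
    + ∑ y ∈ M.N, M.D y * Heaviside ((c (x + y) : ℤ) - (M.θ : ℤ))

/-- A configuration is stable when every cell holds fewer than `θ` grains. -/
def Sandpile.Stable {d : ℕ} (M : Sandpile d) (c : (Fin d → ℤ) → ℕ) : Prop :=
  ∀ x, c x < M.θ

/-- A configuration is finite when its total number of grains is finite,
equivalently its support is finite. -/
def FiniteConfig {d : ℕ} (c : (Fin d → ℤ) → ℕ) : Prop :=
  (Function.support c).Finite

/-- Sequential toppling at an unstable cell `x`: remove `θ` grains from `x`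
and add `D(y−x)` grains to each `y ∈ x + N`, other cells unchanged. -/
def Sandpile.SeqStepAt {d : ℕ} (M : Sandpile d) (x : Fin d → ℤ)
    (c c' : (Fin d → ℤ) → ℕ) : Prop :=
  M.θ ≤ c x ∧
    ∀ y, c' y = (if y = x then c y - M.θ else c y)
      + (if y - x ∈ M.N then M.D (y - x) else 0)

/-- `c ⇀ c'`: a sequential toppling at some unstable cell. -/
def Sandpile.SeqStep {d : ℕ} (M : Sandpile d)
    (c c' : (Fin d → ℤ) → ℕ) : Prop :=
  ∃ x, M.SeqStepAt x c c'

/-- `c ⇀* c'`: reflexive–transitive closure of `⇀`. -/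
def Sandpile.SeqReach {d : ℕ} (M : Sandpile d)
    (c c' : (Fin d → ℤ) → ℕ) : Prop :=
  Relation.ReflTransGen M.SeqStep c c'

/-- The neighborhood is complete: every element of `ℤ^d` is a nonnegative
integer combination of elements of `N`. -/
def Sandpile.Complete {d : ℕ} (M : Sandpile d) : Prop :=
  ∀ z : Fin d → ℤ, ∃ a : (Fin d → ℤ) → ℕ, z = ∑ v ∈ M.N, (a v : ℤ) • v

/-- The configuration lies within the elementary hypercube of side `n`:
`c x = 0` for all `x ∉ {0,…,n−1}^d`. -/
def InCube {d : ℕ} (n : ℕ) (c : (Fin d → ℤ) → ℕ) : Prop :=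
  ∀ x : Fin d → ℤ, (¬ ∀ i, 0 ≤ x i ∧ x i < (n : ℤ)) → c x = 0

/-- Add one grain at cell `y` (i.e. `c + 1_y`). -/
def addGrain {d : ℕ} (c : (Fin d → ℤ) → ℕ) (y : Fin d → ℤ) : (Fin d → ℤ) → ℕ :=
  fun x => if x = y then c x + 1 else c x

/-- `r` is the maximal sup-norm of a neighborhood vector:
`r = max{|v|_∞ : v ∈ N}`. -/
def Sandpile.IsRadius {d : ℕ} (M : Sandpile d) (r : ℕ) : Prop :=
  (∀ v ∈ M.N, ∀ i, (v i).natAbs ≤ r) ∧ (∃ v ∈ M.N, ∃ i, (v i).natAbs = r)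

/-!
Fix a coordinate and cut the space above and below the cube into layers of width `2r`.
Completeness provides neighbors pointing both ways, so every cell of a layer sends a grain back
into the layer when it topples: once some cell of a layer has toppled, the layer holds a grain
forever. Tracing back the first toppling beyond a given level shows that every layer between the
cube and a toppled cell contains a toppled cell. At a late enough time these disjoint layers hold
distinct grains of the conserved initial mass `G < 2θ n^d`, so along each coordinate the toppled
cells span at most `n + 2r + 2rG + 1` values.
-/
open Finset Function

lemma Finset.sum_comp_add_right_eq_sum {G β : Type*} [AddCommGroup G] [AddCommMonoid β]
    {E : Finset G} {f : G → β} {y : G} (hf : ∀ z, f z ≠ 0 → z ∈ E ∧ z - y ∈ E) :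
    ∑ x ∈ E, f (x + y) = ∑ x ∈ E, f x :=
  sum_bij_ne_zero (fun x _ _ ↦ x + y) (fun x _ hx ↦ (hf _ hx).1)
    (fun _ _ _ _ _ _ h ↦ add_right_cancel h)
    (fun z _ hz ↦ ⟨z - y, (hf z hz).2, by rwa [sub_add_cancel], sub_add_cancel z y⟩)
    (fun _ _ _ ↦ rfl)

lemma Finset.card_le_sum_of_pairwiseDisjoint {α ι : Type*} {f : α → ℕ} {E : Finset α}
    (hf : ∀ x, f x ≠ 0 → x ∈ E) {I : Finset ι} {S : ι → Set α}
    (hS : (I : Set ι).PairwiseDisjoint S) (hpos : ∀ a ∈ I, ∃ x ∈ S a, 0 < f x) :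
    #I ≤ ∑ x ∈ E, f x := by
  classical
  have hdisj : (I : Set ι).PairwiseDisjoint fun a ↦ E.filter (· ∈ S a) := fun a ha b hb hab ↦
    disjoint_left.2 fun _ hx hx' ↦
      Set.disjoint_left.1 (hS ha hb hab) (mem_filter.1 hx).2 (mem_filter.1 hx').2
  calc #I = ∑ _a ∈ I, 1 := card_eq_sum_ones I
    _ ≤ ∑ a ∈ I, ∑ x ∈ E.filter (· ∈ S a), f x := sum_le_sum fun a ha ↦ by
        obtain ⟨x, hxS, hx⟩ := hpos a ha
        exact hx.trans_le (single_le_sum (f := f) (fun _ _ ↦ Nat.zero_le _)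
          (mem_filter.2 ⟨hf x hx.ne', hxS⟩))
    _ = ∑ x ∈ I.biUnion fun a ↦ E.filter (· ∈ S a), f x := (sum_biUnion hdisj).symm
    _ ≤ ∑ x ∈ E, f x := sum_le_sum_of_subset (biUnion_subset.2 fun _ _ ↦ filter_subset _ _)

lemma pairwise_disjoint_sumElim {ι κ α : Type*} {f : ι → Set α} {g : κ → Set α}
    (hf : Pairwise (Disjoint on f)) (hg : Pairwise (Disjoint on g))
    (hfg : ∀ i k, Disjoint (f i) (g k)) : Pairwise (Disjoint on Sum.elim f g) := by
  rintro (i | k) (i' | k') h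
  · exact hf (fun hi ↦ h (congrArg _ hi))
  · exact hfg i k'
  · exact (hfg i' k).symm
  · exact hg (fun hk ↦ h (congrArg _ hk))

namespace AddMonoidHom

variable {G : Type*} [AddCommGroup G] (φ : G →+ ℤ)

def layer (m w : ℤ) (j : ℕ) : Set G := φ ⁻¹' Set.Ico (m + j * w) (m + (j + 1) * w)

lemma pairwise_disjoint_layer (m w : ℤ) : Pairwise (Disjoint on φ.layer m w) := fun j j' h ↦
  Disjoint.preimage φ (by simpa only [smul_eq_mul, Int.cast_natCast] using
    Set.pairwise_disjoint_Ico_add_zsmul m w (Nat.cast_injective.ne h))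

lemma disjoint_layer_neg {m m' w : ℤ} (hm : 0 < m + m') (hw : 0 ≤ w) (j j' : ℕ) :
    Disjoint (φ.layer m w j) ((-φ).layer m' w j') := by
  refine Set.disjoint_left.2 fun z hz hz' ↦ ?_
  simp only [layer, Set.mem_preimage, Set.mem_Ico, neg_apply] at hz hz'
  linarith [hz.1, hz'.1, mul_nonneg (Nat.cast_nonneg j : (0 : ℤ) ≤ j) hw,
    mul_nonneg (Nat.cast_nonneg j' : (0 : ℤ) ≤ j') hw]

end AddMonoidHom

lemma Int.exists_nat_forall_lt_mul_le_and_lt_mul (v : ℤ) {b : ℤ} (hb : 0 < b) :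
    ∃ p : ℕ, (∀ j < p, (j + 1) * b ≤ v) ∧ v < (p + 1) * b := by
  refine ⟨(v / b).toNat, fun j hj ↦ (Int.le_ediv_iff_mul_le hb).1 (by omega), ?_⟩
  calc v < (v / b + 1) * b := Int.lt_ediv_add_one_mul_self v hb
    _ ≤ ((v / b).toNat + 1) * b := by gcongr; exact Int.self_le_toNat _

lemma Set.finite_and_ncard_le_of_forall_sub_le {d K : ℕ} {T : Set (Fin d → ℤ)}
    (h : ∀ i, ∀ x ∈ T, ∀ x' ∈ T, x i - x' i ≤ K) : T.Finite ∧ T.ncard ≤ (K + 1) ^ d := by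
  rcases T.eq_empty_or_nonempty with rfl | ⟨x₀, hx₀⟩
  · simp
  have hlow : ∀ i, ∃ lo : ℤ, ∀ x ∈ T, lo ≤ x i ∧ x i ≤ lo + K := fun i ↦ by
    obtain ⟨_, ⟨x₁, hx₁, rfl⟩, hmin⟩ := Int.exists_least_of_bdd (P := fun z ↦ ∃ x ∈ T, x i = z)
      ⟨x₀ i - K, by rintro _ ⟨x, hx, rfl⟩; linarith [h i x₀ hx₀ x hx]⟩ ⟨_, x₀, hx₀, rfl⟩
    exact ⟨x₁ i, fun x hx ↦ ⟨hmin _ ⟨x, hx, rfl⟩, by linarith [h i x hx x₁ hx₁]⟩⟩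
  choose lo hlo using hlow
  have hsub : T ⊆ Finset.Icc lo (fun i ↦ lo i + K) := fun x hx ↦ by
    simpa [Pi.le_def, forall_and] using fun i ↦ hlo i x hx
  have hcard : #(Finset.Icc lo (fun i ↦ lo i + K)) = (K + 1) ^ d := by
    have hside : ∀ i, (lo i + K + 1 - lo i).toNat = K + 1 := fun i ↦ by omega
    simp [Pi.card_Icc, Int.card_Icc, hside]
  refine ⟨(Finset.finite_toSet _).subset hsub, ?_⟩
  calc T.ncard ≤ (Finset.Icc lo (fun i ↦ lo i + K) : Set (Fin d → ℤ)).ncard :=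
        Set.ncard_le_ncard hsub (Finset.finite_toSet _)
    _ = (K + 1) ^ d := by rw [Set.ncard_coe_finset, hcard]

noncomputable def thickCube {d : ℕ} (n k : ℕ) : Finset (Fin d → ℤ) :=
  Icc (fun _ ↦ -(k : ℤ)) (fun _ ↦ n - 1 + k)

section thickCube

variable {d n k : ℕ} {x : Fin d → ℤ}

lemma mem_thickCube : x ∈ thickCube n k ↔ ∀ i, -(k : ℤ) ≤ x i ∧ x i ≤ n - 1 + k := by
  simp only [thickCube, mem_Icc, Pi.le_def, forall_and]

lemma thickCube_mono {k' : ℕ} (h : k ≤ k') : thickCube (d := d) n k ⊆ thickCube n k' := by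
  intro x hx
  have h' : (k : ℤ) ≤ k' := by exact_mod_cast h
  rw [mem_thickCube] at hx ⊢
  exact fun i ↦ ⟨by linarith [hx i], by linarith [hx i]⟩

lemma sub_mem_thickCube {r : ℕ} {y : Fin d → ℤ} (hx : x ∈ thickCube n k)
    (hy : ∀ i, (y i).natAbs ≤ r) : x - y ∈ thickCube n (k + r) := by
  rw [mem_thickCube] at hx ⊢
  intro i
  have hyi := abs_le.1 (show |y i| ≤ r by rw [Int.abs_eq_natAbs]; exact_mod_cast hy i)
  simp only [Pi.sub_apply, Nat.cast_add]
  constructor <;> linarith [hx i]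

lemma card_thickCube_zero : #(thickCube (d := d) n 0) = n ^ d := by
  simp [thickCube, Pi.card_Icc, Int.card_Icc]

lemma mem_thickCube_zero_of_inCube {c : (Fin d → ℤ) → ℕ} (hc : InCube n c) (hx : c x ≠ 0) :
    x ∈ thickCube n 0 := by
  by_contra h
  refine hx (hc x fun hcube ↦ h (mem_thickCube.2 fun i ↦ ?_))
  have := hcube i
  push_cast
  omega

lemma sum_thickCube_zero_add_le {c : (Fin d → ℤ) → ℕ} {B : ℕ} (hc : ∀ x, c x < B) :
    ∑ x ∈ thickCube n 0, c x + n ^ d ≤ B * n ^ d :=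
  calc ∑ x ∈ thickCube n 0, c x + n ^ d = ∑ x ∈ thickCube (d := d) n 0, (c x + 1) := by
        rw [sum_add_distrib, sum_const, card_thickCube_zero, smul_eq_mul, mul_one]
    _ ≤ #(thickCube (d := d) n 0) • B := sum_le_card_nsmul _ _ _ fun x _ ↦ hc x
    _ = B * n ^ d := by rw [card_thickCube_zero, smul_eq_mul, mul_comm]

end thickCube

namespace Sandpile

variable {d : ℕ} (M : Sandpile d)

lemma θ_pos : 0 < M.θ := by
  obtain ⟨v, hv⟩ := M.N_nonempty
  exact (M.D_pos v hv).trans (single_le_sum (fun _ _ ↦ Nat.zero_le _) hv)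

def fire (c : (Fin d → ℤ) → ℕ) (x : Fin d → ℤ) : ℕ := if M.θ ≤ c x then 1 else 0

variable {M} {c : (Fin d → ℤ) → ℕ} {x : Fin d → ℤ}

lemma fire_eq_zero_iff : M.fire c x = 0 ↔ c x < M.θ := by
  simp [fire]

lemma F_apply_eq (c : (Fin d → ℤ) → ℕ) (x : Fin d → ℤ) :
    M.F c x = c x - M.θ * M.fire c x + ∑ y ∈ M.N, M.D y * M.fire c (x + y) := by
  simp only [F, Heaviside, fire, sub_nonneg, Nat.cast_le]

lemma F_add_θ_mul_fire (c : (Fin d → ℤ) → ℕ) (x : Fin d → ℤ) :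
    M.F c x + M.θ * M.fire c x = c x + ∑ y ∈ M.N, M.D y * M.fire c (x + y) := by
  rw [F_apply_eq]
  by_cases h : M.θ ≤ c x <;> simp only [fire, h, if_true, if_false] <;> omega

lemma F_le_of_forall_lt (h : ∀ y ∈ M.N, c (x + y) < M.θ) : M.F c x ≤ c x := by
  rw [F_apply_eq, sum_eq_zero fun y hy ↦ by rw [fire_eq_zero_iff.2 (h y hy), mul_zero]]
  omega

lemma exists_mem_le_of_lt_F (h : c x < M.F c x) : ∃ y ∈ M.N, M.θ ≤ c (x + y) := by
  by_contra! h'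
  exact (F_le_of_forall_lt h').not_gt h

lemma le_F_of_lt (h : c x < M.θ) : c x ≤ M.F c x := by
  rw [F_apply_eq, fire_eq_zero_iff.2 h]
  omega

lemma D_le_F {y : Fin d → ℤ} (hy : y ∈ M.N) (h : M.θ ≤ c (x + y)) : M.D y ≤ M.F c x := by
  have hfire : M.fire c (x + y) = 1 := if_pos h
  calc M.D y = M.D y * M.fire c (x + y) := by rw [hfire, mul_one]
    _ ≤ ∑ y ∈ M.N, M.D y * M.fire c (x + y) :=
      single_le_sum (f := fun y ↦ M.D y * M.fire c (x + y)) (fun _ _ ↦ Nat.zero_le _) hy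
    _ ≤ M.F c x := by rw [F_apply_eq]; omega

lemma F_eq_self_of_stable (h : M.Stable c) : M.F c = c :=
  funext fun x ↦ by
    rw [F_apply_eq, fire_eq_zero_iff.2 (h x),
      sum_eq_zero fun y _ ↦ by rw [fire_eq_zero_iff.2 (h _), mul_zero]]
    simp

lemma sum_F_eq_sum {E : Finset (Fin d → ℤ)}
    (hE : ∀ z, M.θ ≤ c z → z ∈ E ∧ ∀ y ∈ M.N, z - y ∈ E) :
    ∑ x ∈ E, M.F c x = ∑ x ∈ E, c x := by
  have hshift : ∀ y ∈ M.N, ∑ x ∈ E, M.fire c (x + y) = ∑ x ∈ E, M.fire c x := fun y hy ↦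
    sum_comp_add_right_eq_sum fun z hz ↦ by
      have hz : M.θ ≤ c z := by simpa [fire_eq_zero_iff] using hz
      exact ⟨(hE z hz).1, (hE z hz).2 y hy⟩
  have hinflow : ∑ x ∈ E, ∑ y ∈ M.N, M.D y * M.fire c (x + y) = M.θ * ∑ x ∈ E, M.fire c x := by
    rw [sum_comm, θ, sum_mul]
    exact sum_congr rfl fun y hy ↦ by rw [← mul_sum, hshift y hy]
  have h : ∑ x ∈ E, (M.F c x + M.θ * M.fire c x)
      = ∑ x ∈ E, (c x + ∑ y ∈ M.N, M.D y * M.fire c (x + y)) :=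
    sum_congr rfl fun x _ ↦ F_add_θ_mul_fire c x
  rw [sum_add_distrib, sum_add_distrib, ← mul_sum, hinflow] at h
  omega

section Spreading

variable {n r : ℕ} (hr : ∀ v ∈ M.N, ∀ i, (v i).natAbs ≤ r)
include hr

lemma F_ne_zero_mem_thickCube {k : ℕ} (hc : ∀ x, c x ≠ 0 → x ∈ thickCube n k)
    (hx : M.F c x ≠ 0) : x ∈ thickCube n (k + r) := by
  by_contra hxk
  have hcx : c x = 0 := by
    by_contra h
    exact hxk (thickCube_mono (Nat.le_add_right k r) (hc x h))
  obtain ⟨y, hy, hxy⟩ := exists_mem_le_of_lt_F (by omega : c x < M.F c x)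
  have hxy' := hc (x + y) (by have := M.θ_pos; omega)
  exact hxk (by simpa using sub_mem_thickCube hxy' (hr y hy))

lemma iterate_F_ne_zero_mem_thickCube (hcube : InCube n c) (t : ℕ) (hx : M.F^[t] c x ≠ 0) :
    x ∈ thickCube n (t * r) := by
  induction t generalizing x with
  | zero =>
    rw [zero_mul]
    exact mem_thickCube_zero_of_inCube hcube hx
  | succ t ih =>
    rw [iterate_succ_apply'] at hx
    rw [Nat.succ_mul]
    exact F_ne_zero_mem_thickCube hr (fun _ ↦ ih) hx

lemma mem_thickCube_of_le_iterate_F (hcube : InCube n c) {t : ℕ} (hx : M.θ ≤ M.F^[t] c x) :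
    x ∈ thickCube n (t * r) :=
  iterate_F_ne_zero_mem_thickCube hr hcube t (by have := M.θ_pos; omega)

lemma sum_iterate_F (hcube : InCube n c) (t : ℕ) :
    ∑ x ∈ thickCube n (t * r), M.F^[t] c x = ∑ x ∈ thickCube n 0, c x := by
  induction t with
  | zero => rw [zero_mul, iterate_zero, id]
  | succ t ih =>
    have hsub := thickCube_mono (d := d) (n := n) (Nat.le_add_right (t * r) r)
    rw [← ih, iterate_succ_apply', Nat.succ_mul, sum_F_eq_sum fun z hz ↦ ?_]
    · exact (sum_subset hsub fun x _ hx ↦ by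
        by_contra h
        exact hx (iterate_F_ne_zero_mem_thickCube hr hcube t h)).symm
    · have hz' := mem_thickCube_of_le_iterate_F hr hcube hz
      exact ⟨hsub hz', fun y hy ↦ sub_mem_thickCube hz' (hr y hy)⟩

end Spreading

variable (M) in
def toppled (c : (Fin d → ℤ) → ℕ) : Set (Fin d → ℤ) := {x | ∃ s, M.θ ≤ M.F^[s] c x}

variable (M) in
/-- Once one of its cells has toppled, a trap holds a grain forever: each of its cells sends
grains back into it when it topples. -/
def IsTrap (S : Set (Fin d → ℤ)) : Prop := ∀ z ∈ S, ∃ y ∈ M.N, z - y ∈ S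

lemma IsTrap.exists_pos_F {S : Set (Fin d → ℤ)} (hS : M.IsTrap S) (h : ∃ x ∈ S, 0 < c x) :
    ∃ x ∈ S, 0 < M.F c x := by
  by_cases hunst : ∃ z ∈ S, M.θ ≤ c z
  · obtain ⟨z, hz, hθ⟩ := hunst
    obtain ⟨y, hy, hzy⟩ := hS z hz
    exact ⟨z - y, hzy, Nat.lt_of_lt_of_le (M.D_pos y hy) (D_le_F hy (by rwa [sub_add_cancel]))⟩
  · push Not at hunst
    obtain ⟨x, hx, hpos⟩ := h
    exact ⟨x, hx, hpos.trans_le (le_F_of_lt (hunst x hx))⟩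

lemma IsTrap.exists_pos_iterate_F {S : Set (Fin d → ℤ)} (hS : M.IsTrap S) {z : Fin d → ℤ}
    (hz : z ∈ S) {t₀ t : ℕ} (hz' : M.θ ≤ M.F^[t₀] c z) (ht : t₀ ≤ t) :
    ∃ x ∈ S, 0 < M.F^[t] c x := by
  induction t, ht using Nat.le_induction with
  | base => exact ⟨z, hz, M.θ_pos.trans_le hz'⟩
  | succ t _ ih =>
    simp only [iterate_succ_apply']
    exact hS.exists_pos_F ih

/-- At a late enough time every trap holds its own grain of the conserved mass. -/
lemma card_le_sum_of_isTrap {n r : ℕ} (hr : ∀ v ∈ M.N, ∀ i, (v i).natAbs ≤ r)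
    (hcube : InCube n c) {ι : Type*} {I : Finset ι} {S : ι → Set (Fin d → ℤ)}
    (hS : (I : Set ι).PairwiseDisjoint S) (htrap : ∀ a ∈ I, M.IsTrap (S a))
    (hact : ∀ a ∈ I, ∃ z ∈ S a, z ∈ M.toppled c) :
    #I ≤ ∑ x ∈ thickCube n 0, c x := by
  choose! z hzS hzt using hact
  choose! t ht using fun a ha ↦ (hzt a ha : ∃ s, M.θ ≤ M.F^[s] c (z a))
  rw [← sum_iterate_F hr hcube (I.sup t)]
  exact card_le_sum_of_pairwiseDisjoint (fun _ ↦ iterate_F_ne_zero_mem_thickCube hr hcube _) hS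
    fun a ha ↦ (htrap a ha).exists_pos_iterate_F (hzS a ha) (ht a ha) (le_sup ha)

lemma Complete.exists_mem_neg (hcomp : M.Complete) {φ : (Fin d → ℤ) →+ ℤ} (hφ : φ ≠ 0) :
    ∃ y ∈ M.N, φ y < 0 := by
  obtain ⟨z, hz⟩ : ∃ z, φ z < 0 := by
    obtain ⟨z, hz⟩ := DFunLike.ne_iff.1 hφ
    rcases (show φ z ≠ 0 from hz).lt_or_gt with h | h
    · exact ⟨z, h⟩
    · exact ⟨-z, by rwa [map_neg, neg_lt_zero]⟩
  by_contra! hN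
  obtain ⟨a, rfl⟩ := hcomp z
  rw [map_sum] at hz
  refine hz.not_ge (sum_nonneg fun v hv ↦ ?_)
  rw [map_zsmul, smul_eq_mul]
  exact mul_nonneg (Int.natCast_nonneg _) (hN v hv)

section Layers

variable {φ : (Fin d → ℤ) →+ ℤ} {r : ℕ} (hφ : ∀ y ∈ M.N, |φ y| ≤ r)
include hφ

/-- Tracing back the first toppling beyond level `a`: the cell that made it topple lies
within distance `r` below `a`. -/
lemma exists_mem_toppled_near {a : ℤ} (h0 : ∀ x, M.θ ≤ c x → φ x < a)
    (hx : x ∈ M.toppled c) (ha : a ≤ φ x) :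
    ∃ z ∈ M.toppled c, φ z < a ∧ a ≤ φ z + r := by
  obtain ⟨s, hs⟩ := hx
  induction s generalizing x with
  | zero => exact absurd (h0 x hs) ha.not_gt
  | succ s ih =>
    by_cases hprev : M.θ ≤ M.F^[s] c x
    · exact ih ha hprev
    rw [iterate_succ_apply'] at hs
    obtain ⟨y, hy, hxy⟩ := exists_mem_le_of_lt_F ((not_le.1 hprev).trans_le hs)
    have hφxy : φ (x + y) = φ x + φ y := map_add φ x y
    by_cases hnear : φ (x + y) < a
    · exact ⟨x + y, ⟨s, hxy⟩, hnear, by linarith [(abs_le.1 (hφ y hy)).1]⟩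
    · exact ih (not_lt.1 hnear) hxy

lemma isTrap_layer (hcomp : M.Complete) (hφ0 : φ ≠ 0) (m : ℤ) (j : ℕ) :
    M.IsTrap (φ.layer m (2 * r) j) := by
  intro z hz
  simp only [AddMonoidHom.layer, Set.mem_preimage, Set.mem_Ico] at hz ⊢
  by_cases hlow : φ z < m + j * (2 * r) + r
  · obtain ⟨y, hy, hφy⟩ := hcomp.exists_mem_neg hφ0
    refine ⟨y, hy, ?_⟩
    rw [map_sub]
    constructor <;> linarith [abs_le.1 (hφ y hy)]
  · obtain ⟨y, hy, hφy⟩ := hcomp.exists_mem_neg (neg_ne_zero.2 hφ0)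
    refine ⟨y, hy, ?_⟩
    rw [map_sub]
    rw [AddMonoidHom.neg_apply] at hφy
    constructor <;> linarith [abs_le.1 (hφ y hy)]

lemma exists_mem_layer_toppled {m : ℤ} (h0 : ∀ x, M.θ ≤ c x → φ x < m)
    (hx : x ∈ M.toppled c) {j : ℕ} (hj : m + j * (2 * r) + r ≤ φ x) :
    ∃ z ∈ φ.layer m (2 * r) j, z ∈ M.toppled c := by
  have hjr : (0 : ℤ) ≤ j * (2 * r) := by positivity
  obtain ⟨z, hz, hza, hza'⟩ :=
    exists_mem_toppled_near hφ (fun x hx ↦ (h0 x hx).trans_le (by linarith)) hx hj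
  exact ⟨z, ⟨by linarith, by linarith⟩, hz⟩

lemma exists_layers_toppled (hr : 0 < r) {m : ℤ} (h0 : ∀ x, M.θ ≤ c x → φ x < m)
    (hx : x ∈ M.toppled c) :
    ∃ p : ℕ, φ x < m + r + 2 * r * p ∧ ∀ j < p, ∃ z ∈ φ.layer m (2 * r) j, z ∈ M.toppled c := by
  obtain ⟨p, hp, hxp⟩ :=
    Int.exists_nat_forall_lt_mul_le_and_lt_mul (φ x - m + r) (by omega : (0 : ℤ) < 2 * r)
  exact ⟨p, by linarith, fun j hj ↦ exists_mem_layer_toppled hφ h0 hx (by linarith [hp j hj])⟩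

end Layers

lemma one_le_of_forall_natAbs_le {r : ℕ} (hr : ∀ v ∈ M.N, ∀ i, (v i).natAbs ≤ r) : 1 ≤ r := by
  obtain ⟨v, hv⟩ := M.N_nonempty
  obtain ⟨i, hi⟩ : ∃ i, v i ≠ 0 := by
    by_contra! h
    have hv0 : v = 0 := funext h
    exact M.zero_not_mem (hv0 ▸ hv)
  exact (Int.natAbs_pos.2 hi).trans_le (hr v hv i)

lemma one_le_of_mem_toppled {n : ℕ} (hd : 1 ≤ d) (hcube : InCube n c) (hx : x ∈ M.toppled c) :
    1 ≤ n := by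
  obtain ⟨z, hz⟩ : ∃ z, M.θ ≤ c z := by
    by_contra! hstable
    obtain ⟨s, hs⟩ := hx
    rw [iterate_fixed (F_eq_self_of_stable hstable)] at hs
    exact (hstable x).not_ge hs
  have := mem_thickCube.1 (mem_thickCube_zero_of_inCube hcube (M.θ_pos.trans_le hz).ne') ⟨0, hd⟩
  omega

lemma sub_le_of_mem_toppled {n r : ℕ} (hr : ∀ v ∈ M.N, ∀ i, (v i).natAbs ≤ r)
    (hcube : InCube n c) (hcomp : M.Complete) (i : Fin d) {x x' : Fin d → ℤ}
    (hx : x ∈ M.toppled c) (hx' : x' ∈ M.toppled c) :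
    x i - x' i ≤ n + 2 * r + 2 * r * ∑ z ∈ thickCube n 0, c z := by
  set φ := Pi.evalAddMonoidHom (fun _ : Fin d ↦ ℤ) i
  have hφ0 : φ ≠ 0 := fun h ↦ by simpa [φ] using DFunLike.congr_fun h (Pi.single i 1)
  have hφ : ∀ y ∈ M.N, |φ y| ≤ r := fun y hy ↦ by
    rw [Int.abs_eq_natAbs]; exact_mod_cast hr y hy i
  have hφ' : ∀ y ∈ M.N, |(-φ) y| ≤ r := by simpa only [AddMonoidHom.neg_apply, abs_neg] using hφ
  have hcube' : ∀ z, M.θ ≤ c z → 0 ≤ z i ∧ z i < n := fun z hz ↦ by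
    have := mem_thickCube.1 (mem_thickCube_zero_of_inCube hcube (M.θ_pos.trans_le hz).ne') i
    push_cast at this
    omega
  have hr0 := one_le_of_forall_natAbs_le hr
  obtain ⟨p, hxp, hp⟩ := exists_layers_toppled hφ hr0 (m := n)
    (fun z hz ↦ show z i < n from (hcube' z hz).2) hx
  obtain ⟨q, hxq, hq⟩ := exists_layers_toppled hφ' hr0 (m := 1)
    (fun z hz ↦ show -z i < 1 by linarith [hcube' z hz]) hx'
  have hcard := card_le_sum_of_isTrap hr hcube (I := (range p).disjSum (range q))
    (S := Sum.elim (φ.layer n (2 * r)) ((-φ).layer 1 (2 * r)))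
    ((pairwise_disjoint_sumElim (φ.pairwise_disjoint_layer _ _) ((-φ).pairwise_disjoint_layer _ _)
      (φ.disjoint_layer_neg (by omega) (by positivity))).set_pairwise _)
    (by rintro (j | j) _ <;>
      [exact isTrap_layer hφ hcomp hφ0 _ j; exact isTrap_layer hφ' hcomp (neg_ne_zero.2 hφ0) _ j])
    (by rintro (j | j) hj <;> simp only [inl_mem_disjSum, inr_mem_disjSum, mem_range] at hj <;>
      [exact hp j hj; exact hq j hj])
  rw [card_disjSum, card_range, card_range] at hcard
  have hG : (2 * r : ℤ) * (p + q) ≤ 2 * r * ∑ z ∈ thickCube n 0, c z :=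
    mul_le_mul_of_nonneg_left (by exact_mod_cast hcard) (by positivity)
  have hxq' : -x' i < 1 + r + 2 * r * q := hxq
  have hxp' : x i < n + r + 2 * r * p := hxp
  linarith

end Sandpile

/-- for a complete neighborhood of radius `r` and a
configuration `c` within the elementary hypercube of side `n` with all cells
below `2θ`, the set of cells that topple at some time during the parallel
evolution is finite, of cardinality at most `(8·d·θ·r·n^d)^d`. -/
theorem sandpile_toppled_cells_card_bound {d : ℕ} (hd : 1 ≤ d) (M : Sandpile d)
    (hcomp : M.Complete) (r : ℕ) (hr : M.IsRadius r) (n : ℕ)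
    (c : (Fin d → ℤ) → ℕ) (hcube : InCube n c) (hbound : ∀ x, c x < 2 * M.θ) :
    {x : Fin d → ℤ | ∃ s, M.θ ≤ M.F^[s] c x}.Finite ∧
      {x : Fin d → ℤ | ∃ s, M.θ ≤ M.F^[s] c x}.ncard
        ≤ (8 * d * M.θ * r * n ^ d) ^ d := by
  set G := ∑ x ∈ thickCube n 0, c x
  obtain ⟨hfin, hcard⟩ := Set.finite_and_ncard_le_of_forall_sub_le (K := n + 2 * r + 2 * r * G)
    fun i x hx x' hx' ↦ by exact_mod_cast Sandpile.sub_le_of_mem_toppled hr.1 hcube hcomp i hx hx'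
  refine ⟨hfin, ?_⟩
  rcases (M.toppled c).eq_empty_or_nonempty with hT | ⟨x₀, hx₀⟩
  · change (M.toppled c).ncard ≤ _
    simp [hT]
  have hn := Sandpile.one_le_of_mem_toppled hd hcube hx₀
  have hr1 := Sandpile.one_le_of_forall_natAbs_le hr.1
  have hG : 2 * r * (G + n ^ d) ≤ 2 * r * (2 * M.θ * n ^ d) :=
    Nat.mul_le_mul_left _ (sum_thickCube_zero_add_le hbound)
  have hnd : n ≤ n ^ d := Nat.le_self_pow (by omega) n
  have hrn : r ≤ r * n ^ d := Nat.le_mul_of_pos_right r (by omega)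
  have hθrn : r * n ^ d ≤ M.θ * r * n ^ d := by
    rw [mul_assoc]; exact Nat.le_mul_of_pos_left _ M.θ_pos
  have hd' : M.θ * r * n ^ d ≤ d * (M.θ * r * n ^ d) := Nat.le_mul_of_pos_left _ hd
  refine hcard.trans (Nat.pow_le_pow_left ?_ d)
  nlinarith
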